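/- arXiv:2412.14919 — 3 statements merged into one kernel-verified Lean document; each statement's English description precedes it below -/
import Mathlib

section
/- Let G be a sorting network on n wires with K comparators, x̂ ∈ [0,1]^n, and v_1 ≤ v_2 ≤ … ≤ v_n nonnegative coefficients. Then the point (x̃^0,…,x̃^K) with x̃^k_{φ(l,k)} = x̂_l minimizes ∑_{l=1}^n v_l x^K_l over the sorting network polytope P(G, x̂); in particular, min over P(G,x̂) of ∑_l v_l x^K_l equals ∑_l v_l times the l-th smallest entry of x̂. -/
/-!
The sorted point lies in `P(G, x̂)` because every comparator of the actual run on `x̂` satisfies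
the polytope's constraints. For the lower bound, pull the weights back to the input,
`y = v ∘ φ⁻¹`, and run the network on `y` alongside an arbitrary point `X` of the polytope. At each
comparator the pairing of the current weights with `X^k` can only grow, and since `G` sorts, the
weights end up as `v`. Hence `∑ y_l x̂_l ≤ ∑ v_l X^K_l`, and the left side is the objective
value of the sorted point.
-/


/-- One comparator step of a comparison network: `q w` is the entry currently on wire
`w`; the comparator `c = (i, j)` swaps the entries on wires `i` and `j` whenever the
value on wire `j` is at most the value on wire `i`. -/
noncomputable def sortStep {n : ℕ} (x : Fin n → ℝ) (c : Fin n × Fin n) (q : Fin n → Fin n) :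
    Fin n → Fin n :=
  if x (q c.2) ≤ x (q c.1) then q ∘ Equiv.swap c.1 c.2 else q

/-- After executing the comparison network `G` on input `x`, `wireEntry x G w` is the
index of the entry of `x` located on wire `w`. -/
noncomputable def wireEntry {n : ℕ} (x : Fin n → ℝ) (G : List (Fin n × Fin n)) : Fin n → Fin n :=
  G.foldl (fun q c => sortStep x c q) id

/-- Membership in the sorting network polytope `P(G, x̂)`: `X 0 = x̂`, all coordinates in
`[0,1]`, and for each comparator `(i_k, j_k)`:
`x^{k+1}_{i_k} ≤ min{x^k_{i_k}, x^k_{j_k}}`, `x^{k+1}_{j_k} ≥ max{x^k_{i_k}, x^k_{j_k}}`,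
`x^{k+1}_{i_k} + x^{k+1}_{j_k} = x^k_{i_k} + x^k_{j_k}`, and all other coordinates are
copied. -/
def InSNP {n : ℕ} (G : List (Fin n × Fin n)) (xh : Fin n → ℝ) (X : ℕ → Fin n → ℝ) :
    Prop :=
  X 0 = xh ∧
  (∀ k ≤ G.length, ∀ l, X k l ∈ Set.Icc (0 : ℝ) 1) ∧
  ∀ k : Fin G.length,
    X (k + 1) (G.get k).1 ≤ X k (G.get k).1 ∧
    X (k + 1) (G.get k).1 ≤ X k (G.get k).2 ∧
    X k (G.get k).1 ≤ X (k + 1) (G.get k).2 ∧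
    X k (G.get k).2 ≤ X (k + 1) (G.get k).2 ∧
    X (k + 1) (G.get k).1 + X (k + 1) (G.get k).2 = X k (G.get k).1 + X k (G.get k).2 ∧
    ∀ l, l ≠ (G.get k).1 → l ≠ (G.get k).2 → X (k + 1) l = X k l

section

variable {n : ℕ}

def compareExchange {α : Type*} [LinearOrder α] (c : Fin n × Fin n) (a : Fin n → α) :
    Fin n → α :=
  if a c.2 ≤ a c.1 then a ∘ Equiv.swap c.1 c.2 else a

lemma comp_sortStep (x : Fin n → ℝ) (c : Fin n × Fin n) (q : Fin n → Fin n) :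
    x ∘ sortStep x c q = compareExchange c (x ∘ q) :=
  apply_ite (x ∘ ·) _ _ _

lemma wireEntry_take_succ (x : Fin n → ℝ) (G : List (Fin n × Fin n)) (k : Fin G.length) :
    wireEntry x (G.take (k + 1)) = sortStep x (G.get k) (wireEntry x (G.take k)) := by
  rw [wireEntry, wireEntry, List.take_add_one, List.getElem?_eq_getElem k.isLt, Option.toList_some,
    List.foldl_append]
  rfl

lemma bijective_foldl_sortStep (x : Fin n → ℝ) (G : List (Fin n × Fin n)) {q : Fin n → Fin n}
    (hq : q.Bijective) : (G.foldl (fun q c => sortStep x c q) q).Bijective := by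
  induction G generalizing q with
  | nil => exact hq
  | cons c G ih =>
    refine ih (show (sortStep x c q).Bijective from ?_)
    unfold sortStep
    split_ifs
    exacts [hq.comp (Equiv.swap c.1 c.2).bijective, hq]

lemma wireEntry_bijective (x : Fin n → ℝ) (G : List (Fin n × Fin n)) :
    (wireEntry x G).Bijective :=
  bijective_foldl_sortStep x G Function.bijective_id

/-- The paper's `x̃^k`: the values on the wires after the first `k` comparators. -/
noncomputable def networkTrajectory (x : Fin n → ℝ) (G : List (Fin n × Fin n)) (k : ℕ) :
    Fin n → ℝ :=
  x ∘ wireEntry x (G.take k)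

lemma networkTrajectory_succ (x : Fin n → ℝ) (G : List (Fin n × Fin n)) (k : Fin G.length) :
    networkTrajectory x G (k + 1) = compareExchange (G.get k) (networkTrajectory x G k) := by
  rw [networkTrajectory, wireEntry_take_succ, comp_sortStep]
  rfl

lemma networkTrajectory_length (x : Fin n → ℝ) (G : List (Fin n × Fin n)) :
    networkTrajectory x G G.length = x ∘ wireEntry x G := by
  rw [networkTrajectory, List.take_length]

/-- The constraints that `InSNP` imposes on consecutive points `a = x^k`, `b = x^{k+1}` for
the comparator `c`. -/
def ComparatorStep (c : Fin n × Fin n) (a b : Fin n → ℝ) : Prop :=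
  b c.1 ≤ a c.1 ∧ b c.1 ≤ a c.2 ∧ a c.1 ≤ b c.2 ∧ a c.2 ≤ b c.2 ∧
    b c.1 + b c.2 = a c.1 + a c.2 ∧ ∀ l, l ≠ c.1 → l ≠ c.2 → b l = a l

lemma comparatorStep_compareExchange (c : Fin n × Fin n) (a : Fin n → ℝ) :
    ComparatorStep c a (compareExchange c a) := by
  obtain ⟨i, j⟩ := c
  unfold compareExchange ComparatorStep
  dsimp only
  split_ifs with h
  · by_cases hij : i = j
    · simp [hij]
    · simp only [Function.comp_apply, Equiv.swap_apply_left, Equiv.swap_apply_right]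
      exact ⟨h, le_rfl, le_rfl, h, add_comm _ _,
        fun l h1 h2 => by rw [Equiv.swap_apply_of_ne_of_ne h1 h2]⟩
  · have h' := (not_le.1 h).le
    exact ⟨le_rfl, h', h', le_rfl, rfl, fun _ _ _ => rfl⟩

lemma sum_sub_sum_of_eq_off_pair {f g : Fin n → ℝ} {i j : Fin n} (hij : i ≠ j)
    (h : ∀ l, l ≠ i → l ≠ j → f l = g l) :
    ∑ l, g l - ∑ l, f l = (g i - f i) + (g j - f j) := by
  rw [← Finset.sum_sub_distrib, ← Finset.sum_pair hij (f := fun l => g l - f l)]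
  refine (Finset.sum_subset (Finset.subset_univ _) fun l _ hl => ?_).symm
  simp only [Finset.mem_insert, Finset.mem_singleton, not_or] at hl
  rw [h l hl.1 hl.2, sub_self]

/-- The larger weight moves onto wire `c.2`, whose value can only grow, while the total of the
two values is unchanged. -/
lemma sum_mul_le_sum_compareExchange_mul {c : Fin n × Fin n} {a b : Fin n → ℝ}
    (hab : ComparatorStep c a b) (u : Fin n → ℝ) :
    ∑ l, u l * a l ≤ ∑ l, compareExchange c u l * b l := by
  obtain ⟨i, j⟩ := c
  obtain ⟨hbi, -, hai, haj, hsum, hrest⟩ := hab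
  dsimp only at *
  by_cases hij : i = j
  · subst hij
    have hba : b = a := funext fun l => by
      by_cases hl : l = i
      · subst hl; exact le_antisymm hbi hai
      · exact hrest l hl hl
    simp [compareExchange, hba]
  rw [← sub_nonneg, sum_sub_sum_of_eq_off_pair hij fun l hi hj => ?_]
  · unfold compareExchange
    dsimp only
    split_ifs with hu
    · simp only [Function.comp_apply, Equiv.swap_apply_left, Equiv.swap_apply_right]
      linear_combination mul_nonneg (sub_nonneg.2 hu) (sub_nonneg.2 hai) - u j * hsum
    · linear_combination mul_nonneg (sub_nonneg.2 (not_le.1 hu).le) (sub_nonneg.2 haj) - u i * hsum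
  · unfold compareExchange
    split_ifs
    · simp [Equiv.swap_apply_of_ne_of_ne hi hj, hrest l hi hj]
    · simp [hrest l hi hj]

lemma inSNP_networkTrajectory (G : List (Fin n × Fin n)) {xh : Fin n → ℝ}
    (hx : ∀ l, xh l ∈ Set.Icc (0 : ℝ) 1) : InSNP G xh (networkTrajectory xh G) :=
  ⟨rfl, fun _ _ _ => hx _, fun k => by
    rw [networkTrajectory_succ]; exact comparatorStep_compareExchange _ _⟩

lemma sum_mul_le_sum_networkTrajectory_mul {G : List (Fin n × Fin n)} {X : ℕ → Fin n → ℝ}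
    (hX : ∀ k : Fin G.length, ComparatorStep (G.get k) (X k) (X (k + 1))) (y : Fin n → ℝ) :
    ∀ k ≤ G.length, ∑ l, y l * X 0 l ≤ ∑ l, networkTrajectory y G k l * X k l := by
  intro k
  induction k with
  | zero => intro; rfl
  | succ k ih =>
    intro hk
    have step := sum_mul_le_sum_compareExchange_mul (hX ⟨k, hk⟩) (networkTrajectory y G k)
    rw [← networkTrajectory_succ] at step
    exact (ih (by omega)).trans step

end

theorem sorted_point_minimizes_general (n : ℕ) (G : List (Fin n × Fin n))
    (hsort : ∀ y : Fin n → ℝ, Monotone fun w => y (wireEntry y G w))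
    (xh : Fin n → ℝ) (hx : ∀ l, xh l ∈ Set.Icc (0 : ℝ) 1)
    (v : Fin n → ℝ) (hv : Monotone v) :
    IsLeast {s : ℝ | ∃ X : ℕ → Fin n → ℝ, InSNP G xh X ∧ s = ∑ l, v l * X G.length l}
      (∑ l, v l * xh (wireEntry xh G l)) := by
  refine ⟨⟨_, inSNP_networkTrajectory G hx, by rw [networkTrajectory_length]; rfl⟩, ?_⟩
  rintro _ ⟨X, ⟨hX0, -, hX⟩, rfl⟩
  set e := Equiv.ofBijective _ (wireEntry_bijective xh G)
  set y := v ∘ e.symm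
  set e' := Equiv.ofBijective _ (wireEntry_bijective y G)
  have hy : y ∘ wireEntry y G = v :=
    Tuple.unique_monotone (f := v) (σ := e'.trans e.symm) (τ := Equiv.refl _) (hsort y) hv
  calc ∑ l, v l * xh (e l)
      = ∑ l, y l * xh l := by simpa [y] using e.sum_comp fun l => y l * xh l
    _ ≤ ∑ l, networkTrajectory y G G.length l * X G.length l :=
      hX0 ▸ sum_mul_le_sum_networkTrajectory_mul hX y _ le_rfl
    _ = ∑ l, v l * X G.length l := by rw [networkTrajectory_length, hy]

/-- for non-decreasing nonnegative coefficients `v`, the point with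
`x̃^k_{φ(l,k)} = x̂_l` minimizes `∑_l v_l x^K_l` over the sorting network polytope
`P(G, x̂)`; the minimum equals `∑_l v_l` times the `l`-th smallest entry of `x̂`. -/
theorem sorted_point_minimizes (n : ℕ) (G : List (Fin n × Fin n))
    (hG : ∀ c ∈ G, c.1 < c.2)
    (hsort : ∀ y : Fin n → ℝ, Monotone fun w => y (wireEntry y G w))
    (xh : Fin n → ℝ) (hx : ∀ l, xh l ∈ Set.Icc (0 : ℝ) 1)
    (v : Fin n → ℝ) (hv : Monotone v) (hv0 : ∀ l, 0 ≤ v l) :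
    IsLeast {s : ℝ | ∃ X : ℕ → Fin n → ℝ, InSNP G xh X ∧ s = ∑ l, v l * X G.length l}
      (∑ l, v l * xh (wireEntry xh G l)) :=
  sorted_point_minimizes_general n G hsort xh hx v hv
end

section
/- For every i* ∈ {2,…,n} and every τ ∈ {1,2}^{{2,…,i*−1}}, the inequality x_{1,1} + x_{1,2} + ∑_{i=2}^{i*−1} x_{i,τ_i} + x_{i*,1} + x_{i*,2} ≤ i* is valid for all binary matrices x ∈ {0,1}^{n×2} satisfying ∑_{i=1}^n 2^{n−i}(x_{i,1} + x_{i,2}) ≤ 2^n − 1; moreover, x_{1,1} + x_{1,2} ≤ 1 is also valid. -/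
/-!
A point violating the inequality with apex row `k` has at least one entry `1` in every row above
`k` and two in row `k`, so its knapsack weight is at least
`∑_{i<k} 2^(n-1-i) + 2 · 2^(n-1-k) = 2^n`. The bound on the first row is the same count with `k = 0`.
-/

open Finset

lemma sum_range_two_pow_sub_add {n k : ℕ} (hk : k ≤ n) :
    ∑ i ∈ range k, 2 ^ (n - 1 - i) + 2 ^ (n - k) = 2 ^ n := by
  induction k with
  | zero => simp
  | succ k ih =>
    have hsplit : 2 ^ (n - k) = 2 ^ (n - 1 - k) + 2 ^ (n - (k + 1)) := by
      rw [show n - k = n - (k + 1) + 1 by omega, pow_succ, show n - 1 - k = n - (k + 1) by omega]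
      ring
    rw [sum_range_succ, add_assoc, ← hsplit]
    exact ih (by omega)

/-- Row sums of the lightest point violating the lifted cover inequality with apex row `k`. -/
def coverRowSum (k i : ℕ) : ℕ := if i < k then 1 else if i = k then 2 else 0

lemma sum_two_pow_mul_coverRowSum {n k : ℕ} (hk : k < n) :
    ∑ i ∈ range n, 2 ^ (n - 1 - i) * coverRowSum k i = 2 ^ n := by
  have htail : ∑ i ∈ Ico (k + 1) n, 2 ^ (n - 1 - i) * coverRowSum k i = 0 :=
    sum_eq_zero fun i hi => by
      have := (mem_Ico.1 hi).1
      simp [coverRowSum, show ¬ i < k by omega, show i ≠ k by omega]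
  have hhead : ∑ i ∈ range k, 2 ^ (n - 1 - i) * coverRowSum k i = ∑ i ∈ range k, 2 ^ (n - 1 - i) :=
    sum_congr rfl fun i hi => by simp [coverRowSum, mem_range.1 hi]
  rw [← sum_range_add_sum_Ico _ hk, htail, add_zero, sum_range_succ, hhead,
    ← sum_range_two_pow_sub_add hk.le]
  simp only [coverRowSum, lt_irrefl, if_false, if_true]
  rw [show n - k = n - 1 - k + 1 by omega, pow_succ]

lemma two_pow_le_sum_of_cover {n : ℕ} (r : Fin n → ℕ) (k : Fin n) (hlt : ∀ i < k, 1 ≤ r i)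
    (hk : 2 ≤ r k) : 2 ^ n ≤ ∑ i : Fin n, 2 ^ (n - 1 - (i : ℕ)) * r i := by
  have hr (i : Fin n) : coverRowSum k i ≤ r i := by
    unfold coverRowSum
    split_ifs with hik hik'
    · exact hlt i hik
    · rwa [Fin.ext hik']
    · exact Nat.zero_le _
  calc 2 ^ n = ∑ i : Fin n, 2 ^ (n - 1 - (i : ℕ)) * coverRowSum k i := by
        rw [Fin.sum_univ_eq_sum_range (fun i => 2 ^ (n - 1 - i) * coverRowSum k i),
          sum_two_pow_mul_coverRowSum k.isLt]
    _ ≤ _ := sum_le_sum fun i _ => Nat.mul_le_mul_left _ (hr i)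

lemma eq_one_of_card_le_sum {ι : Type*} {s : Finset ι} {f : ι → ℕ} (hf : ∀ i ∈ s, f i ≤ 1)
    (h : #s ≤ ∑ i ∈ s, f i) : ∀ i ∈ s, f i = 1 := by
  have hle : ∑ i ∈ s, f i ≤ ∑ _i ∈ s, 1 := sum_le_sum hf
  rw [sum_const, smul_eq_mul, mul_one] at hle
  refine (sum_eq_sum_iff_of_le hf).1 ?_
  rw [sum_const, smul_eq_mul, mul_one]
  omega

lemma card_filter_pos_lt_le {n : ℕ} (k : Fin n) :
    #(univ.filter fun i : Fin n => 0 < (i : ℕ) ∧ (i : ℕ) < k) ≤ k - 1 := by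
  rcases Nat.eq_zero_or_pos (k : ℕ) with hk | hk
  · simp [hk]
  have hsub : univ.filter (fun i : Fin n => 0 < (i : ℕ) ∧ (i : ℕ) < k) ⊆
      (Iio k).erase ⟨0, hk.trans k.isLt⟩ := fun i hi => by
    simp only [mem_filter, mem_univ, true_and] at hi
    simp only [mem_erase, mem_Iio, ne_eq, Fin.ext_iff, Fin.lt_def]
    omega
  have hmem : ⟨0, hk.trans k.isLt⟩ ∈ Iio k := mem_Iio.2 hk
  simpa [card_erase_of_mem hmem] using card_le_card hsub

/-- the lifted cover inequalities of the complemented orbisack knapsack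
`∑_i 2^{n−i}(x_{i,1} + x_{i,2}) ≤ 2^n − 1` are valid (indices `0`-based: row `0` is the
first row, `istar` is the `0`-based version of `i* ∈ {2,…,n}`, and `τ` selects one
column per intermediate row). -/
theorem orbisack_lci_valid (n : ℕ) (hn : 0 < n) (x : Fin n → Fin 2 → ℕ)
    (hx : ∀ i j, x i j = 0 ∨ x i j = 1)
    (hK : ∑ i : Fin n, 2 ^ (n - 1 - (i : ℕ)) * (x i 0 + x i 1) ≤ 2 ^ n - 1) :
    x ⟨0, hn⟩ 0 + x ⟨0, hn⟩ 1 ≤ 1 ∧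
    ∀ istar : Fin n, 0 < (istar : ℕ) → ∀ τ : Fin n → Fin 2,
      x ⟨0, hn⟩ 0 + x ⟨0, hn⟩ 1 +
        (∑ i ∈ Finset.univ.filter
          (fun i : Fin n => 0 < (i : ℕ) ∧ (i : ℕ) < (istar : ℕ)), x i (τ i)) +
        x istar 0 + x istar 1 ≤ (istar : ℕ) + 1 := by
  have hbin (i : Fin n) (j : Fin 2) : x i j ≤ 1 := by
    rcases hx i j with h | h <;> omega
  have hK' : ∑ i : Fin n, 2 ^ (n - 1 - (i : ℕ)) * (x i 0 + x i 1) < 2 ^ n := by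
    have := Nat.one_le_two_pow (n := n); omega
  set first : Fin n := ⟨0, hn⟩
  have hfirst : x first 0 + x first 1 ≤ 1 := by
    by_contra! h
    refine (two_pow_le_sum_of_cover (fun i => x i 0 + x i 1) first ?_ h).not_gt hK'
    exact fun i hi => absurd (Fin.lt_def.1 hi) (Nat.not_lt_zero _)
  refine ⟨hfirst, fun istar hist τ => ?_⟩
  set s := univ.filter fun i : Fin n => 0 < (i : ℕ) ∧ (i : ℕ) < istar
  have hS : ∑ i ∈ s, x i (τ i) ≤ #s := by
    simpa using sum_le_card_nsmul s _ 1 fun i _ => hbin i (τ i)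
  have hcard : #s ≤ istar - 1 := card_filter_pos_lt_le istar
  by_contra! h
  have := hbin istar 0; have := hbin istar 1
  have hones := eq_one_of_card_le_sum (s := s) (fun i _ => hbin i (τ i)) (by omega)
  refine (two_pow_le_sum_of_cover (fun i => x i 0 + x i 1) istar (fun i hi => ?_)
    (by omega)).not_gt hK'
  rcases Nat.eq_zero_or_pos i with h0 | hpos
  · rw [show i = first from Fin.ext h0]; omega
  · have hrow : ∀ j, x i j ≤ x i 0 + x i 1 := Fin.forall_fin_two.2 ⟨le_self_add, le_add_self⟩
    have := hones i (by simp [s, hpos, hi])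
    have := hrow (τ i)
    omega
end

section
/- Let x ∈ [0,1]^{n×2} and y ∈ [−1,0]^{n−2} satisfy −x_{i,1} ≤ y_i and x_{i,2} ≤ 1 + y_i for all i ∈ {2,…,n−1}, as well as −x_{1,1} + x_{1,2} − x_{i*,1} + x_{i*,2} + ∑_{i=2}^{i*−1} y_i ≤ 0 for some i* ∈ {2,…,n}. Then for every τ ∈ {1,2}^{{2,…,i*−1}}, x satisfies −x_{1,1} + x_{1,2} − x_{i*,1} + x_{i*,2} − ∑_{i: τ_i=1} x_{i,1} − ∑_{i: τ_i=2} x_{i,2} ≤ i* − T(τ) − 2, where T(τ) = |{i ∈ {2,…,i*−1} : τ_i = 1}|. -/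
/-!
Every inner row `i` satisfies `y i ≥ max (x i 1 - 1) (-x i 0)`. Choosing, row by row, the bound
prescribed by `τ` and summing turns the extended-formulation inequality into the lifted cover
inequality, up to the slack `2 ∑_{τ i = 1} x i 1 ≥ 0`.
-/

open Finset

section LiftedCover

variable {ι : Type*} (s : Finset ι) (p : ι → Prop) [DecidablePred p] (a b y : ι → ℝ)

theorem sum_sub_sum_sub_card_le_sum_of_le (ha : ∀ i ∈ s, -a i ≤ y i)
    (hb : ∀ i ∈ s, b i ≤ 1 + y i) :
    ∑ i ∈ s with ¬p i, b i - ∑ i ∈ s with p i, a i - #{i ∈ s | ¬p i} ≤ ∑ i ∈ s, y i := by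
  have hp : ∑ i ∈ s with p i, -a i ≤ ∑ i ∈ s with p i, y i :=
    sum_le_sum fun i hi => ha i (mem_of_mem_filter i hi)
  have hnp : ∑ i ∈ s with ¬p i, (b i - 1) ≤ ∑ i ∈ s with ¬p i, y i :=
    sum_le_sum fun i hi => by linarith [hb i (mem_of_mem_filter i hi)]
  rw [← sum_filter_add_sum_filter_not s p y]
  simp only [sum_neg_distrib, sum_sub_distrib, sum_const, nsmul_one] at hp hnp
  linarith

theorem sub_sum_sub_sum_le_card_filter_not {c : ℝ} (hc : c + ∑ i ∈ s, y i ≤ 0)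
    (ha : ∀ i ∈ s, -a i ≤ y i) (hb : ∀ i ∈ s, b i ≤ 1 + y i) (hb₀ : ∀ i ∈ s, 0 ≤ b i) :
    c - ∑ i ∈ s with p i, a i - ∑ i ∈ s with ¬p i, b i ≤ #{i ∈ s | ¬p i} := by
  have hsum := sum_sub_sum_sub_card_le_sum_of_le s p a b y ha hb
  have hslack : 0 ≤ ∑ i ∈ s with ¬p i, b i :=
    sum_nonneg fun i hi => hb₀ i (mem_of_mem_filter i hi)
  linarith

end LiftedCover

theorem Fin.card_filter_val_pos_lt {n : ℕ} (m : Fin n) :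
    #{i : Fin n | 0 < (i : ℕ) ∧ (i : ℕ) < m} = (m : ℕ) - 1 := by
  have hn : 0 < n := m.pos
  have : ({i : Fin n | 0 < (i : ℕ) ∧ (i : ℕ) < m} : Finset (Fin n)) = Ioo ⟨0, hn⟩ m := by
    ext i
    simp only [mem_filter, mem_univ, true_and, mem_Ioo, Fin.lt_def]
  rw [this, Fin.card_Ioo]
  rfl

theorem orbisack_ef_implies_lci_general (n : ℕ) (hn : 0 < n)
    (x : Fin n → Fin 2 → ℝ) (y : Fin n → ℝ)
    (hx : ∀ i j, x i j ∈ Set.Icc (0 : ℝ) 1)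
    (h1 : ∀ i : Fin n, 0 < (i : ℕ) → (i : ℕ) < n - 1 → -x i 0 ≤ y i)
    (h2 : ∀ i : Fin n, 0 < (i : ℕ) → (i : ℕ) < n - 1 → x i 1 ≤ 1 + y i)
    (istar : Fin n) (histar : 0 < (istar : ℕ))
    (h3 : -x ⟨0, hn⟩ 0 + x ⟨0, hn⟩ 1 - x istar 0 + x istar 1 +
      (∑ i ∈ Finset.univ.filter
        (fun i : Fin n => 0 < (i : ℕ) ∧ (i : ℕ) < (istar : ℕ)), y i) ≤ 0)
    (τ : Fin n → Fin 2) :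
    -x ⟨0, hn⟩ 0 + x ⟨0, hn⟩ 1 - x istar 0 + x istar 1 -
      (∑ i ∈ Finset.univ.filter
        (fun i : Fin n => (0 < (i : ℕ) ∧ (i : ℕ) < (istar : ℕ)) ∧ τ i = 0), x i 0) -
      (∑ i ∈ Finset.univ.filter
        (fun i : Fin n => (0 < (i : ℕ) ∧ (i : ℕ) < (istar : ℕ)) ∧ τ i = 1), x i 1)
      ≤ ((istar : ℕ) : ℝ) + 1 -
        ((Finset.univ.filter
          (fun i : Fin n => (0 < (i : ℕ) ∧ (i : ℕ) < (istar : ℕ)) ∧ τ i = 0)).card : ℝ)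
        - 2 := by
  rw [← filter_filter (fun i : Fin n => 0 < (i : ℕ) ∧ (i : ℕ) < istar) (fun i => τ i = 0),
    ← filter_filter (fun i : Fin n => 0 < (i : ℕ) ∧ (i : ℕ) < istar) (fun i => τ i = 1)]
  set s : Finset (Fin n) := {i | 0 < (i : ℕ) ∧ (i : ℕ) < istar}
  have hinner : ∀ i ∈ s, 0 < (i : ℕ) ∧ (i : ℕ) < n - 1 := fun i hi => by
    simp only [s, mem_filter, mem_univ, true_and] at hi
    omega
  have hτ : ∀ i : Fin n, τ i = 1 ↔ ¬τ i = 0 := fun i => by omega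
  have hlci := sub_sum_sub_sum_le_card_filter_not s (fun i => τ i = 0)
    (fun i => x i 0) (fun i => x i 1) y h3
    (fun i hi => h1 i (hinner i hi).1 (hinner i hi).2)
    (fun i hi => h2 i (hinner i hi).1 (hinner i hi).2) (fun i _ => (hx i 1).1)
  have hcard : (#{i ∈ s | τ i = 0} : ℝ) + #{i ∈ s | ¬τ i = 0} = (istar : ℕ) - 1 := by
    rw [← Nat.cast_add, card_filter_add_card_filter_not, Fin.card_filter_val_pos_lt,
      Nat.cast_pred histar]
  simp only [hτ]
  linarith

/-- the extended-formulation constraints for the orbisack imply the lifted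
cover inequalities (in original orbisack variables). Rows are `0`-indexed: row `0` is
the first row, `istar` is the `0`-based version of `i* ∈ {2,…,n}`, `τ i = 0` means
`τ_i = 1` (first column) and `τ i = 1` means `τ_i = 2` (second column), and
`T(τ) = |{i : τ_i = 1}|`. -/
theorem orbisack_ef_implies_lci (n : ℕ) (hn : 0 < n)
    (x : Fin n → Fin 2 → ℝ) (y : Fin n → ℝ)
    (hx : ∀ i j, x i j ∈ Set.Icc (0 : ℝ) 1)
    (hy : ∀ i : Fin n, 0 < (i : ℕ) → (i : ℕ) < n - 1 → y i ∈ Set.Icc (-1 : ℝ) 0)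
    (h1 : ∀ i : Fin n, 0 < (i : ℕ) → (i : ℕ) < n - 1 → -x i 0 ≤ y i)
    (h2 : ∀ i : Fin n, 0 < (i : ℕ) → (i : ℕ) < n - 1 → x i 1 ≤ 1 + y i)
    (istar : Fin n) (histar : 0 < (istar : ℕ))
    (h3 : -x ⟨0, hn⟩ 0 + x ⟨0, hn⟩ 1 - x istar 0 + x istar 1 +
      (∑ i ∈ Finset.univ.filter
        (fun i : Fin n => 0 < (i : ℕ) ∧ (i : ℕ) < (istar : ℕ)), y i) ≤ 0)
    (τ : Fin n → Fin 2) :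
    -x ⟨0, hn⟩ 0 + x ⟨0, hn⟩ 1 - x istar 0 + x istar 1 -
      (∑ i ∈ Finset.univ.filter
        (fun i : Fin n => (0 < (i : ℕ) ∧ (i : ℕ) < (istar : ℕ)) ∧ τ i = 0), x i 0) -
      (∑ i ∈ Finset.univ.filter
        (fun i : Fin n => (0 < (i : ℕ) ∧ (i : ℕ) < (istar : ℕ)) ∧ τ i = 1), x i 1)
      ≤ ((istar : ℕ) : ℝ) + 1 -
        ((Finset.univ.filter
          (fun i : Fin n => (0 < (i : ℕ) ∧ (i : ℕ) < (istar : ℕ)) ∧ τ i = 0)).card : ℝ)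
        - 2 :=
  orbisack_ef_implies_lci_general n hn x y hx h1 h2 istar histar h3 τ
end
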